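/- arXiv:1304.7886 — 7 statements merged into one kernel-verified Lean document; each statement's English description precedes it below -/
import Mathlib

section
/- The sum-throughput R_sum(τ) = Σ_{i=1}^K R_i(τ) is concave on the nonnegative orthant {τ ∈ ℝ^{K+1} : τ_j ≥ 0 for all j = 0,1,...,K}. -/
/-!
Each throughput `R_i` is the perspective `(x, y) ↦ y f (x / y)` of the concave, nondecreasing
function `f u = log₂ (1 + γ_i u)`, evaluated at `(τ_0, τ_i)`. The perspective is positively
homogeneous, so its concavity on the quadrant reduces to superadditivity. For `y, y' > 0` this is
concavity of `f` at `x / y` and `x' / y'` with weights `y / (y + y')` and `y' / (y + y')`; when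
`y' = 0` the perspective vanishes at `(x', y')` and monotonicity of `f` suffices.
Composing with the linear map `τ ↦ (τ_0, τ_i)` and summing over `i` gives the theorem.
-/

open Real

/-- Throughput of user `i`: `R_i(τ) = τ_i · log₂(1 + γ_i τ_0 / τ_i)` if `τ_i > 0`, else `0`. -/
noncomputable def Rthru {K : ℕ} (γ : Fin K → ℝ) (i : Fin K) (τ : Fin (K + 1) → ℝ) : ℝ :=
  if 0 < τ i.succ then τ i.succ * Real.logb 2 (1 + γ i * τ 0 / τ i.succ) else 0

/-- Sum-throughput `R_sum(τ) = Σ_{i=1}^K R_i(τ)`. -/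
noncomputable def Rsum {K : ℕ} (γ : Fin K → ℝ) (τ : Fin (K + 1) → ℝ) : ℝ :=
  ∑ i, Rthru γ i τ

open Set

theorem concaveOn_of_superadditive_of_homogeneous {𝕜 E β : Type*} [Semiring 𝕜] [PartialOrder 𝕜]
    [AddCommMonoid E] [AddCommMonoid β] [PartialOrder β] [SMul 𝕜 E] [SMul 𝕜 β] {s : Set E}
    {g : E → β} (hs : Convex 𝕜 s)
    (hsmul_mem : ∀ t : 𝕜, 0 ≤ t → ∀ p ∈ s, t • p ∈ s)
    (hsmul : ∀ t : 𝕜, 0 ≤ t → ∀ p ∈ s, g (t • p) = t • g p)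
    (hadd : ∀ p ∈ s, ∀ q ∈ s, g p + g q ≤ g (p + q)) : ConcaveOn 𝕜 s g :=
  ⟨hs, fun p hp q hq a b ha hb _ => by
    rw [← hsmul a ha p hp, ← hsmul b hb q hq]
    exact hadd _ (hsmul_mem a ha p hp) _ (hsmul_mem b hb q hq)⟩

theorem concaveOn_finset_sum {𝕜 E β ι : Type*} [Semiring 𝕜] [PartialOrder 𝕜] [AddCommMonoid E]
    [AddCommMonoid β] [PartialOrder β] [IsOrderedAddMonoid β] [SMul 𝕜 E] [Module 𝕜 β]
    {s : Set E} (hs : Convex 𝕜 s) (t : Finset ι) {f : ι → E → β}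
    (hf : ∀ i ∈ t, ConcaveOn 𝕜 s (f i)) : ConcaveOn 𝕜 s fun x => ∑ i ∈ t, f i x := by
  induction t using Finset.cons_induction with
  | empty => simpa using concaveOn_const (0 : β) hs
  | cons i t hi ih =>
    simp only [Finset.sum_cons]
    exact (hf i (t.mem_cons_self i)).add (ih fun j hj => hf j (Finset.mem_cons_of_mem hj))

/-- Extended by `0`, not by the recession function of `f`, where `y ≤ 0`. -/
noncomputable def perspective (f : ℝ → ℝ) (p : ℝ × ℝ) : ℝ :=
  if 0 < p.2 then p.2 * f (p.1 / p.2) else 0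

theorem perspective_smul (f : ℝ → ℝ) {t : ℝ} (ht : 0 ≤ t) (p : ℝ × ℝ) :
    perspective f (t • p) = t * perspective f p := by
  rcases ht.eq_or_lt with rfl | ht
  · simp [perspective]
  simp only [perspective, Prod.smul_fst, Prod.smul_snd, smul_eq_mul, mul_pos_iff_of_pos_left ht]
  split_ifs
  · rw [mul_div_mul_left _ _ ht.ne', mul_assoc]
  · rw [mul_zero]

theorem perspective_add_le {f : ℝ → ℝ} (hf : ConcaveOn ℝ (Ici 0) f)
    (hmono : MonotoneOn f (Ici 0)) {p q : ℝ × ℝ} (hp : 0 ≤ p) (hq : 0 ≤ q) :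
    perspective f p + perspective f q ≤ perspective f (p + q) := by
  obtain ⟨x, y⟩ := p
  obtain ⟨x', y'⟩ := q
  obtain ⟨hx, hy⟩ : 0 ≤ x ∧ 0 ≤ y := hp
  obtain ⟨hx', hy'⟩ : 0 ≤ x' ∧ 0 ≤ y' := hq
  simp only [perspective, Prod.mk_add_mk]
  rcases hy.eq_or_lt with rfl | hy <;> rcases hy'.eq_or_lt with rfl | hy'
  · simp
  · simp only [lt_self_iff_false, if_false, if_pos hy', zero_add]
    refine mul_le_mul_of_nonneg_left (hmono (div_nonneg hx' hy'.le) ?_ ?_) hy'.le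
    · exact div_nonneg (add_nonneg hx hx') hy'.le
    · gcongr; linarith
  · simp only [lt_self_iff_false, if_false, if_pos hy, add_zero]
    refine mul_le_mul_of_nonneg_left (hmono (div_nonneg hx hy.le) ?_ ?_) hy.le
    · exact div_nonneg (add_nonneg hx hx') hy.le
    · gcongr; linarith
  · have hs : 0 < y + y' := add_pos hy hy'
    rw [if_pos hy, if_pos hy', if_pos hs]
    have key := hf.2 (mem_Ici.2 (div_nonneg hx hy.le)) (mem_Ici.2 (div_nonneg hx' hy'.le))
      (div_nonneg hy.le hs.le) (div_nonneg hy'.le hs.le) (by field_simp)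
    have hcomb :
        (y / (y + y')) • (x / y) + (y' / (y + y')) • (x' / y') = (x + x') / (y + y') := by
      simp only [smul_eq_mul]; field_simp
    rw [hcomb, smul_eq_mul, smul_eq_mul] at key
    calc y * f (x / y) + y' * f (x' / y')
        = (y + y') * (y / (y + y') * f (x / y) + y' / (y + y') * f (x' / y')) := by
          field_simp
      _ ≤ (y + y') * f ((x + x') / (y + y')) := mul_le_mul_of_nonneg_left key hs.le

theorem concaveOn_perspective {f : ℝ → ℝ} (hf : ConcaveOn ℝ (Ici 0) f)
    (hmono : MonotoneOn f (Ici 0)) : ConcaveOn ℝ (Ici (0 : ℝ × ℝ)) (perspective f) :=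
  concaveOn_of_superadditive_of_homogeneous (convex_Ici 0)
    (fun _ ht _ hp => mem_Ici.2 (smul_nonneg ht hp)) (fun _ ht p _ => perspective_smul f ht p)
    (fun _ hp _ hq => perspective_add_le hf hmono hp hq)

theorem concaveOn_logb_one_add_mul {b c : ℝ} (hb : 1 < b) (hc : 0 ≤ c) :
    ConcaveOn ℝ (Ici 0) fun u => logb b (1 + c * u) := by
  let A : ℝ →ᵃ[ℝ] ℝ := (c • LinearMap.id : ℝ →ₗ[ℝ] ℝ).toAffineMap + AffineMap.const ℝ ℝ 1
  have hA (u : ℝ) : A u = 1 + c * u := by simp [A, add_comm]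
  have hlog : ConcaveOn ℝ (Ici 0) fun u => log (1 + c * u) := by
    refine ((strictConcaveOn_log_Ioi.concaveOn.comp_affineMap A).subset
      (fun u (hu : 0 ≤ u) => ?_) (convex_Ici 0)).congr fun u _ => by simp [hA]
    simp only [mem_preimage, mem_Ioi, hA]
    positivity
  simpa only [logb, div_eq_inv_mul, smul_eq_mul] using hlog.smul (inv_nonneg.2 (log_pos hb).le)

theorem monotoneOn_logb_one_add_mul {b c : ℝ} (hb : 1 < b) (hc : 0 ≤ c) :
    MonotoneOn (fun u => logb b (1 + c * u)) (Ici 0) := by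
  intro x (hx : 0 ≤ x) y _ hxy
  dsimp only
  gcongr

theorem Rthru_eq_perspective {K : ℕ} (γ : Fin K → ℝ) (i : Fin K) (τ : Fin (K + 1) → ℝ) :
    Rthru γ i τ = perspective (fun u => logb 2 (1 + γ i * u)) (τ 0, τ i.succ) := by
  simp only [Rthru, perspective, mul_div_assoc]

theorem concaveOn_Rthru {K : ℕ} {γ : Fin K → ℝ} (i : Fin K) (hγ : 0 ≤ γ i) :
    ConcaveOn ℝ (Ici 0) (Rthru γ i) := by
  let L : (Fin (K + 1) → ℝ) →ₗ[ℝ] ℝ × ℝ := (LinearMap.proj 0).prod (LinearMap.proj i.succ)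
  have h := ((concaveOn_perspective (concaveOn_logb_one_add_mul one_lt_two hγ)
    (monotoneOn_logb_one_add_mul one_lt_two hγ)).comp_linearMap L).subset
    (fun τ (hτ : 0 ≤ τ) => show 0 ≤ L τ from ⟨hτ 0, hτ i.succ⟩) (convex_Ici 0)
  exact h.congr fun τ _ => (Rthru_eq_perspective γ i τ).symm

theorem stmt1_general (K : ℕ) (γ : Fin K → ℝ) (hγ : ∀ i, 0 < γ i) :
    ConcaveOn ℝ {τ : Fin (K + 1) → ℝ | ∀ j, 0 ≤ τ j} (Rsum γ) :=
  concaveOn_finset_sum (convex_Ici 0) _ fun i _ => concaveOn_Rthru i (hγ i).le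

/-- The sum-throughput is concave on the nonnegative orthant. -/
theorem stmt1 (K : ℕ) (hK : 1 ≤ K) (γ : Fin K → ℝ) (hγ : ∀ i, 0 < γ i) :
    ConcaveOn ℝ {τ : Fin (K + 1) → ℝ | ∀ j, 0 ≤ τ j} (Rsum γ) :=
  stmt1_general K γ hγ
end

section
/- Let A = Σ_{i=1}^K γ_i and let z* > 1 satisfy z* ln z* − z* + 1 = A. Define τ* ∈ ℝ^{K+1} by τ_0* = (z* − 1)/(A + z* − 1) and τ_i* = γ_i/(A + z* − 1) for i = 1,...,K. Then τ* ∈ D (in fact Σ_{j=0}^K τ_j* = 1 and τ_j* > 0 for all j), and for every τ ∈ D one has R_sum(τ) ≤ R_sum(τ*); i.e., τ* maximizes the sum-throughput over D. -/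
open Real

/-- Feasible set `D = {τ : τ_j ≥ 0 ∀ j, Σ_j τ_j ≤ 1}`. -/
def Dfeas (K : ℕ) : Set (Fin (K + 1) → ℝ) :=
  {τ | (∀ j, 0 ≤ τ j) ∧ ∑ j, τ j ≤ 1}

/-!
Tangent-line bound for the concave logarithm at `z`: `log w ≤ log z + w / z - 1`. Applied to
`w = 1 + γᵢ τ₀ / τᵢ` and multiplied by `τᵢ`, it bounds each throughput by a linear function of `τ`;
when `z ln z − z + 1 = Σ γᵢ` the coefficient of every `τⱼ` becomes `(Σ γᵢ) / z`, so the sum-throughput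
is at most `(Σ γᵢ) / (z ln 2)` on `D`. The allocation `τ*` makes every `wᵢ` equal to `z`, where the
tangent bound is tight, and uses the whole time budget, so it attains this value.
-/

open Finset

theorem log_le_log_add_div_sub_one {w z : ℝ} (hw : 0 < w) (hz : 0 < z) :
    log w ≤ log z + w / z - 1 := by
  have h := log_le_sub_one_of_pos (div_pos hw hz)
  rw [log_div hw.ne' hz.ne'] at h
  linarith

theorem log_sub_one_add_inv_nonneg {z : ℝ} (hz : 0 < z) : 0 ≤ log z - 1 + 1 / z := by
  have h := log_le_log_add_div_sub_one one_pos hz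
  rw [log_one] at h
  linarith

theorem mul_log_one_add_div_le {t u z : ℝ} (ht : 0 < t) (hu : 0 ≤ u) (hz : 0 < z) :
    t * log (1 + u / t) ≤ (log z - 1 + 1 / z) * t + u / z := by
  have hw : 0 < 1 + u / t := by positivity
  calc t * log (1 + u / t) ≤ t * (log z + (1 + u / t) / z - 1) :=
        mul_le_mul_of_nonneg_left (log_le_log_add_div_sub_one hw hz) ht.le
    _ = (log z - 1 + 1 / z) * t + u / z := by field_simp; ring

theorem Rthru_le {K : ℕ} {γ : Fin K → ℝ} {i : Fin K} (hγ : 0 ≤ γ i)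
    {τ : Fin (K + 1) → ℝ} (hτ : ∀ j, 0 ≤ τ j) {z : ℝ} (hz : 0 < z) :
    Rthru γ i τ ≤ ((log z - 1 + 1 / z) * τ i.succ + γ i * τ 0 / z) / log 2 := by
  have hlog2 : 0 < log 2 := log_pos one_lt_two
  unfold Rthru
  split_ifs with ht
  · rw [logb, ← mul_div_assoc]
    exact div_le_div_of_nonneg_right
      (mul_log_one_add_div_le ht (mul_nonneg hγ (hτ 0)) hz) hlog2.le
  · have h₁ := mul_nonneg (log_sub_one_add_inv_nonneg hz) (hτ i.succ)
    have h₂ := div_nonneg (mul_nonneg hγ (hτ 0)) hz.le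
    exact div_nonneg (by linarith) hlog2.le

theorem Rsum_le_of_mul_log_sub_add_one_eq {K : ℕ} {γ : Fin K → ℝ} (hγ : ∀ i, 0 ≤ γ i)
    {z : ℝ} (hz : 0 < z) (hzA : z * log z - z + 1 = ∑ i, γ i)
    {τ : Fin (K + 1) → ℝ} (hτ : τ ∈ Dfeas K) :
    Rsum γ τ ≤ (∑ i, γ i) / z / log 2 := by
  obtain ⟨hτ_nonneg, hτ_sum⟩ := hτ
  set A := ∑ i, γ i
  have hcoef : log z - 1 + 1 / z = A / z := by
    rw [← hzA]; field_simp
  have hA : 0 ≤ A / z := div_nonneg (sum_nonneg fun i _ => hγ i) hz.le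
  rw [Fin.sum_univ_succ] at hτ_sum
  calc Rsum γ τ ≤ ∑ i, ((log z - 1 + 1 / z) * τ i.succ + γ i * τ 0 / z) / log 2 :=
        sum_le_sum fun i _ => Rthru_le (hγ i) hτ_nonneg hz
    _ = A / z * (τ 0 + ∑ i : Fin K, τ i.succ) / log 2 := by
        rw [← sum_div, sum_add_distrib, ← mul_sum, ← sum_div, ← sum_mul, hcoef]
        ring
    _ ≤ A / z * 1 / log 2 := by gcongr
    _ = A / z / log 2 := by rw [mul_one]

theorem optimal_pos {K : ℕ} {γ : Fin K → ℝ} (hγ : ∀ i, 0 < γ i) {z : ℝ} (hz : 1 < z)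
    (hzA : z * log z - z + 1 = ∑ i, γ i) {τs : Fin (K + 1) → ℝ}
    (hτ0 : τs 0 = (z - 1) / (∑ i, γ i + z - 1))
    (hτi : ∀ i, τs i.succ = γ i / (∑ i, γ i + z - 1)) (j : Fin (K + 1)) : 0 < τs j := by
  have hS : 0 < ∑ i, γ i + z - 1 := by nlinarith [log_pos hz]
  cases j using Fin.cases with
  | zero => rw [hτ0]; exact div_pos (by linarith) hS
  | succ i => rw [hτi]; exact div_pos (hγ i) hS

theorem sum_optimal {K : ℕ} {γ : Fin K → ℝ} {z : ℝ} (hz : 1 < z)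
    (hzA : z * log z - z + 1 = ∑ i, γ i) {τs : Fin (K + 1) → ℝ}
    (hτ0 : τs 0 = (z - 1) / (∑ i, γ i + z - 1))
    (hτi : ∀ i, τs i.succ = γ i / (∑ i, γ i + z - 1)) : ∑ j, τs j = 1 := by
  have hS : 0 < ∑ i, γ i + z - 1 := by nlinarith [log_pos hz]
  rw [Fin.sum_univ_succ, hτ0]
  simp only [hτi]
  rw [← sum_div, ← add_div, div_eq_one_iff_eq hS.ne']
  ring

theorem Rsum_optimal {K : ℕ} {γ : Fin K → ℝ} (hγ : ∀ i, 0 < γ i) {z : ℝ} (hz : 1 < z)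
    (hzA : z * log z - z + 1 = ∑ i, γ i) {τs : Fin (K + 1) → ℝ}
    (hτ0 : τs 0 = (z - 1) / (∑ i, γ i + z - 1))
    (hτi : ∀ i, τs i.succ = γ i / (∑ i, γ i + z - 1)) :
    Rsum γ τs = (∑ i, γ i) / z / log 2 := by
  have hpos := optimal_pos hγ hz hzA hτ0 hτi
  have hS : ∑ i, γ i + z - 1 = z * log z := by linarith
  rw [hS] at hτ0 hτi
  have hlog : 0 < log z := log_pos hz
  have hSINR : ∀ i, 1 + γ i * τs 0 / τs i.succ = z := by
    intro i
    rw [hτ0, hτi]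
    field_simp [(hγ i).ne']
    ring
  have hterm : ∀ i, Rthru γ i τs = γ i * (1 / z / log 2) := by
    intro i
    rw [Rthru, if_pos (hpos i.succ), hSINR, hτi, logb]
    field_simp
  simp only [Rsum, hterm, ← sum_mul]
  ring

theorem stmt4_general (K : ℕ) (γ : Fin K → ℝ) (hγ : ∀ i, 0 < γ i)
    (A : ℝ) (hA : A = ∑ i, γ i)
    (z : ℝ) (hz : 1 < z) (hzA : z * Real.log z - z + 1 = A)
    (τs : Fin (K + 1) → ℝ)
    (hτ0 : τs 0 = (z - 1) / (A + z - 1))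
    (hτi : ∀ i : Fin K, τs i.succ = γ i / (A + z - 1)) :
    τs ∈ Dfeas K ∧ (∑ j, τs j = 1) ∧ (∀ j, 0 < τs j) ∧
    ∀ τ ∈ Dfeas K, Rsum γ τ ≤ Rsum γ τs := by
  subst hA
  have hpos := optimal_pos hγ hz hzA hτ0 hτi
  have hsum := sum_optimal hz hzA hτ0 hτi
  refine ⟨⟨fun j => (hpos j).le, hsum.le⟩, hsum, hpos, fun τ hτ => ?_⟩
  rw [Rsum_optimal hγ hz hzA hτ0 hτi]
  exact Rsum_le_of_mul_log_sub_add_one_eq (fun i => (hγ i).le) (by linarith) hzA hτ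

/-- With `A = Σ γ_i` and `z* > 1` solving `z ln z − z + 1 = A`, the allocation
`τ_0* = (z*−1)/(A+z*−1)`, `τ_i* = γ_i/(A+z*−1)` lies in `D` (with total time `1`
and all components positive) and maximizes the sum-throughput over `D`. -/
theorem stmt4 (K : ℕ) (hK : 1 ≤ K) (γ : Fin K → ℝ) (hγ : ∀ i, 0 < γ i)
    (A : ℝ) (hA : A = ∑ i, γ i)
    (z : ℝ) (hz : 1 < z) (hzA : z * Real.log z - z + 1 = A)
    (τs : Fin (K + 1) → ℝ)
    (hτ0 : τs 0 = (z - 1) / (A + z - 1))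
    (hτi : ∀ i : Fin K, τs i.succ = γ i / (A + z - 1)) :
    τs ∈ Dfeas K ∧ (∑ j, τs j = 1) ∧ (∀ j, 0 < τs j) ∧
    ∀ τ ∈ Dfeas K, Rsum γ τ ≤ Rsum γ τs :=
  stmt4_general K γ hγ A hA z hz hzA τs hτ0 hτi
end

section
/- Let A = Σ_{i=1}^K γ_i and let z* > 1 satisfy z* ln z* − z* + 1 = A, and define τ* by τ_0* = (z* − 1)/(A + z* − 1) and τ_i* = γ_i/(A + z* − 1) for i = 1,...,K. Then τ* is the unique maximizer of R_sum over D: for every τ ∈ D with τ ≠ τ*, R_sum(τ) < R_sum(τ*). -/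
open Real

/-
The proof uses the tangent line of the logarithm at z: log y ≤ log z + (y - z)/z, with equality
only at y = z. Applied to y = 1 + γ_i τ_0/τ_i it bounds ln 2 · R_i(τ) by a linear function of τ,
and the equation z ln z − z + 1 = A makes these linear bounds add up to (A/z) Σ_j τ_j ≤ A/z.
Equality forces Σ_j τ_j = 1 and γ_i τ_0 = (z − 1) τ_i for every i; τ* is the only solution of
these linear equations, and it attains A/z.
-/

open Finset

theorem log_le_log_add_sub_div {y z : ℝ} (hy : 0 < y) (hz : 0 < z) :
    log y ≤ log z + (y - z) / z := by
  have h := log_le_sub_one_of_pos (div_pos hy hz)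
  rw [log_div hy.ne' hz.ne', div_sub_one hz.ne'] at h
  linarith

theorem log_lt_log_add_sub_div {y z : ℝ} (hy : 0 < y) (hz : 0 < z) (hyz : y ≠ z) :
    log y < log z + (y - z) / z := by
  have h := log_lt_sub_one_of_pos (div_pos hy hz) (by rwa [Ne, div_eq_one_iff_eq hz.ne'])
  rw [log_div hy.ne' hz.ne', div_sub_one hz.ne'] at h
  linarith

theorem mul_log_sub_add_one_pos {z : ℝ} (hz0 : 0 < z) (hz : z ≠ 1) : 0 < z * log z - z + 1 := by
  have h := log_lt_log_add_sub_div one_pos hz0 hz.symm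
  rw [log_one] at h
  have h' := mul_lt_mul_of_pos_left h hz0
  rw [mul_add, mul_div_cancel₀ _ hz0.ne'] at h'
  linarith

noncomputable def throughputNats (g t₀ t : ℝ) : ℝ :=
  if 0 < t then t * log (1 + g * t₀ / t) else 0

section TangentBound

variable {z g t₀ t : ℝ}

theorem throughputNats_le (hz : 0 < z) (hg : 0 ≤ g) (ht₀ : 0 ≤ t₀) (ht : 0 ≤ t) :
    throughputNats g t₀ t ≤ t * (log z - 1 + 1 / z) + g * t₀ / z := by
  unfold throughputNats
  split_ifs with htpos
  · calc t * log (1 + g * t₀ / t)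
        ≤ t * (log z + (1 + g * t₀ / t - z) / z) := by
          gcongr
          exact log_le_log_add_sub_div (by positivity) hz
      _ = t * (log z - 1 + 1 / z) + g * t₀ / z := by field_simp; ring
  · have ht0 : t = 0 := le_antisymm (not_lt.mp htpos) ht
    subst ht0
    simp only [zero_mul, zero_add]
    positivity

theorem throughputNats_lt (hz : 0 < z) (hg : 0 ≤ g) (ht₀ : 0 ≤ t₀) (ht : 0 ≤ t)
    (hne : g * t₀ ≠ (z - 1) * t) :
    throughputNats g t₀ t < t * (log z - 1 + 1 / z) + g * t₀ / z := by
  unfold throughputNats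
  split_ifs with htpos
  · have hyz : 1 + g * t₀ / t ≠ z := by
      contrapose! hne
      field_simp at hne
      linarith
    calc t * log (1 + g * t₀ / t)
        < t * (log z + (1 + g * t₀ / t - z) / z) := by
          gcongr
          exact log_lt_log_add_sub_div (by positivity) hz hyz
      _ = t * (log z - 1 + 1 / z) + g * t₀ / z := by field_simp; ring
  · have ht0 : t = 0 := le_antisymm (not_lt.mp htpos) ht
    subst ht0
    simp only [mul_zero, ne_eq, mul_eq_zero, not_or] at hne
    simp only [zero_mul, zero_add]
    have hg0 : 0 < g := lt_of_le_of_ne hg (Ne.symm hne.1)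
    have ht₀0 : 0 < t₀ := lt_of_le_of_ne ht₀ (Ne.symm hne.2)
    positivity

theorem throughputNats_eq (hz : 0 < z) (ht : 0 ≤ t) (heq : g * t₀ = (z - 1) * t) :
    throughputNats g t₀ t = t * (log z - 1 + 1 / z) + g * t₀ / z := by
  unfold throughputNats
  rw [heq]
  split_ifs with htpos
  · rw [mul_div_assoc, div_self htpos.ne', mul_one, add_sub_cancel]
    field_simp
    ring
  · obtain rfl : t = 0 := le_antisymm (not_lt.mp htpos) ht
    simp

end TangentBound

section SumThroughput

variable {K : ℕ} {γ : Fin K → ℝ} {z : ℝ} {τ : Fin (K + 1) → ℝ}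

theorem Rsum_mul_log_two :
    Rsum γ τ * log 2 = ∑ i, throughputNats (γ i) (τ 0) (τ i.succ) := by
  rw [Rsum, sum_mul]
  refine sum_congr rfl fun i _ => ?_
  have hlog2 : log 2 ≠ 0 := (log_pos one_lt_two).ne'
  unfold Rthru throughputNats
  split_ifs
  · rw [logb, mul_assoc, div_mul_cancel₀ _ hlog2]
  · rw [zero_mul]

theorem sum_tangent_bound_eq (hz : 0 < z) (hzA : z * log z - z + 1 = ∑ i, γ i) :
    ∑ i, (τ i.succ * (log z - 1 + 1 / z) + γ i * τ 0 / z) = (∑ i, γ i) / z * ∑ j, τ j := by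
  have hc : log z - 1 + 1 / z = (∑ i, γ i) / z := by
    rw [← hzA]
    field_simp
  rw [sum_add_distrib, ← sum_mul, ← sum_div, ← sum_mul, hc, Fin.sum_univ_succ]
  ring

theorem Rsum_mul_log_two_le (hγ : ∀ i, 0 ≤ γ i) (hz : 0 < z)
    (hzA : z * log z - z + 1 = ∑ i, γ i) (hτ : ∀ j, 0 ≤ τ j) :
    Rsum γ τ * log 2 ≤ (∑ i, γ i) / z * ∑ j, τ j := by
  rw [Rsum_mul_log_two, ← sum_tangent_bound_eq hz hzA]
  exact sum_le_sum fun i _ => throughputNats_le hz (hγ i) (hτ 0) (hτ i.succ)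

theorem Rsum_mul_log_two_lt (hγ : ∀ i, 0 ≤ γ i) (hz : 0 < z)
    (hzA : z * log z - z + 1 = ∑ i, γ i) (hτ : ∀ j, 0 ≤ τ j)
    {i : Fin K} (hi : γ i * τ 0 ≠ (z - 1) * τ i.succ) :
    Rsum γ τ * log 2 < (∑ i, γ i) / z * ∑ j, τ j := by
  rw [Rsum_mul_log_two, ← sum_tangent_bound_eq hz hzA]
  exact sum_lt_sum (fun i _ => throughputNats_le hz (hγ i) (hτ 0) (hτ i.succ))
    ⟨i, mem_univ _, throughputNats_lt hz (hγ i) (hτ 0) (hτ i.succ) hi⟩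

theorem Rsum_mul_log_two_eq (hz : 0 < z) (hzA : z * log z - z + 1 = ∑ i, γ i)
    (hτ : ∀ j, 0 ≤ τ j) (h : ∀ i, γ i * τ 0 = (z - 1) * τ i.succ) :
    Rsum γ τ * log 2 = (∑ i, γ i) / z * ∑ j, τ j := by
  rw [Rsum_mul_log_two, ← sum_tangent_bound_eq hz hzA]
  exact sum_congr rfl fun i _ => throughputNats_eq hz (hτ i.succ) (h i)

theorem eq_of_mul_eq_of_sum_eq_one (hz : z ≠ 1) (hD : (∑ i, γ i) + z - 1 ≠ 0)
    (h : ∀ i, γ i * τ 0 = (z - 1) * τ i.succ) (hsum : ∑ j, τ j = 1) :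
    τ 0 = (z - 1) / ((∑ i, γ i) + z - 1) ∧
      ∀ i, τ i.succ = γ i / ((∑ i, γ i) + z - 1) := by
  have hz1 : z - 1 ≠ 0 := sub_ne_zero.mpr hz
  have hτ0_mul : τ 0 * ((∑ i, γ i) + z - 1) = z - 1 := by
    have hsum' : (z - 1) * ∑ j, τ j = z - 1 := by rw [hsum, mul_one]
    rw [Fin.sum_univ_succ, mul_add, mul_sum] at hsum'
    simp_rw [← h, ← sum_mul] at hsum'
    linarith
  have hτ0 : τ 0 = (z - 1) / ((∑ i, γ i) + z - 1) := by
    rw [eq_div_iff hD, hτ0_mul]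
  refine ⟨hτ0, fun i => ?_⟩
  have hi := h i
  rw [hτ0] at hi
  field_simp at hi ⊢
  linarith

end SumThroughput

theorem stmt5_general (K : ℕ) (γ : Fin K → ℝ) (hγ : ∀ i, 0 < γ i)
    (A : ℝ) (hA : A = ∑ i, γ i)
    (z : ℝ) (hz : 1 < z) (hzA : z * Real.log z - z + 1 = A)
    (τs : Fin (K + 1) → ℝ)
    (hτ0 : τs 0 = (z - 1) / (A + z - 1))
    (hτi : ∀ i : Fin K, τs i.succ = γ i / (A + z - 1)) :
    ∀ τ ∈ Dfeas K, τ ≠ τs → Rsum γ τ < Rsum γ τs := by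
  rintro τ ⟨hτ, hτ_sum⟩ hne
  subst hA
  have hz0 : 0 < z := by linarith
  have hγ' : ∀ i, 0 ≤ γ i := fun i => (hγ i).le
  have hA0 : 0 < ∑ i, γ i := hzA ▸ mul_log_sub_add_one_pos hz0 hz.ne'
  have hD : 0 < (∑ i, γ i) + z - 1 := by linarith
  have hτs : ∀ j, 0 ≤ τs j := Fin.cases (by rw [hτ0]; exact div_nonneg (by linarith) hD.le)
    fun i => by rw [hτi]; exact div_nonneg (hγ' i) hD.le
  have hτs_prop : ∀ i, γ i * τs 0 = (z - 1) * τs i.succ := fun i => by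
    rw [hτ0, hτi]; ring
  have hτs_sum : ∑ j, τs j = 1 := by
    rw [Fin.sum_univ_succ, hτ0]
    simp_rw [hτi, ← sum_div]
    field_simp
    ring
  refine lt_of_mul_lt_mul_right ?_ (log_nonneg one_le_two)
  rw [Rsum_mul_log_two_eq hz0 hzA hτs hτs_prop, hτs_sum, mul_one]
  rcases hτ_sum.lt_or_eq with hlt | heq
  · calc Rsum γ τ * log 2 ≤ (∑ i, γ i) / z * ∑ j, τ j := Rsum_mul_log_two_le hγ' hz0 hzA hτ
      _ < (∑ i, γ i) / z := mul_lt_of_lt_one_right (by positivity) hlt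
  · obtain ⟨i, hi⟩ : ∃ i, γ i * τ 0 ≠ (z - 1) * τ i.succ := by
      by_contra! h
      obtain ⟨h0, hi⟩ := eq_of_mul_eq_of_sum_eq_one hz.ne' hD.ne' h heq
      exact hne (funext (Fin.cases (h0.trans hτ0.symm) fun i => (hi i).trans (hτi i).symm))
    calc Rsum γ τ * log 2 < (∑ i, γ i) / z * ∑ j, τ j := Rsum_mul_log_two_lt hγ' hz0 hzA hτ hi
      _ = (∑ i, γ i) / z := by rw [heq, mul_one]

/-- With `A = Σ γ_i` and `z* > 1` solving `z ln z − z + 1 = A`, the allocation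
`τ_0* = (z*−1)/(A+z*−1)`, `τ_i* = γ_i/(A+z*−1)` is the unique maximizer of the
sum-throughput over `D`: every other feasible `τ` achieves strictly less. -/
theorem stmt5 (K : ℕ) (hK : 1 ≤ K) (γ : Fin K → ℝ) (hγ : ∀ i, 0 < γ i)
    (A : ℝ) (hA : A = ∑ i, γ i)
    (z : ℝ) (hz : 1 < z) (hzA : z * Real.log z - z + 1 = A)
    (τs : Fin (K + 1) → ℝ)
    (hτ0 : τs 0 = (z - 1) / (A + z - 1))
    (hτi : ∀ i : Fin K, τs i.succ = γ i / (A + z - 1)) :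
    ∀ τ ∈ Dfeas K, τ ≠ τs → Rsum γ τ < Rsum γ τs :=
  stmt5_general K γ hγ A hA z hz hzA τs hτ0 hτi
end

section
/- The function A ↦ τ_0*(A) = (z*(A) − 1)/(A + z*(A) − 1) is strictly decreasing on (0,∞): for all 0 < A₁ < A₂ one has τ_0*(A₂) < τ_0*(A₁). -/
/-!
The map `z ↦ z log z - z + 1` has derivative `log z > 0` on `(1, ∞)`, so `z*(A)` is strictly
increasing in `A`. The defining equation gives `A + z*(A) - 1 = z*(A) log z*(A)`, hence
`τ₀*(A) = φ(z*(A))` with `φ z = (z - 1) / (z log z)`, and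
`φ' z = (log z - (z - 1)) / (z log z)²` is negative on `(1, ∞)` because `log z < z - 1`.
-/

open Real Set

namespace Real

theorem hasDerivAt_mul_log_sub_self {z : ℝ} (hz : z ≠ 0) :
    HasDerivAt (fun z => z * log z - z) (log z) z := by
  refine (((hasDerivAt_id' z).mul (hasDerivAt_log hz)).sub (hasDerivAt_id' z)).congr_deriv ?_
  field_simp
  ring

theorem strictMonoOn_mul_log_sub_self : StrictMonoOn (fun z => z * log z - z) (Ici 1) := by
  apply strictMonoOn_of_deriv_pos (convex_Ici 1)
  · intro z hz
    have hz0 : z ≠ 0 := (zero_lt_one.trans_le hz).ne'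
    exact (hasDerivAt_mul_log_sub_self hz0).continuousAt.continuousWithinAt
  · intro z hz
    rw [interior_Ici] at hz
    rw [(hasDerivAt_mul_log_sub_self (zero_lt_one.trans hz).ne').deriv]
    exact log_pos hz

theorem hasDerivAt_sub_one_div_mul_log {z : ℝ} (hz : z * log z ≠ 0) :
    HasDerivAt (fun z => (z - 1) / (z * log z)) ((log z - (z - 1)) / (z * log z) ^ 2) z := by
  have hz0 : z ≠ 0 := left_ne_zero_of_mul hz
  refine (((hasDerivAt_id' z).sub_const 1).div
    ((hasDerivAt_id' z).mul (hasDerivAt_log hz0)) hz).congr_deriv ?_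
  simp only [Pi.mul_apply]
  field_simp
  ring

theorem strictAntiOn_sub_one_div_mul_log :
    StrictAntiOn (fun z => (z - 1) / (z * log z)) (Ioi 1) := by
  have hpos : ∀ z ∈ Ioi (1 : ℝ), 0 < z * log z := fun z hz =>
    mul_pos (zero_lt_one.trans hz) (log_pos hz)
  apply strictAntiOn_of_deriv_neg (convex_Ioi 1)
  · exact fun z hz =>
      (hasDerivAt_sub_one_div_mul_log (hpos z hz).ne').continuousAt.continuousWithinAt
  · intro z hz
    rw [interior_Ioi] at hz
    rw [(hasDerivAt_sub_one_div_mul_log (hpos z hz).ne').deriv]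
    have hlog : log z < z - 1 := log_lt_sub_one_of_pos (zero_lt_one.trans hz) hz.ne'
    exact div_neg_of_neg_of_pos (by linarith) (pow_pos (hpos z hz) 2)

end Real

/-- The optimal downlink time allocation `τ_0*(A) = (z*(A)−1)/(A+z*(A)−1)`, where
`z*(A) > 1` solves `z ln z − z + 1 = A`, is strictly decreasing in `A` on `(0,∞)`. -/
theorem stmt6 (zs : ℝ → ℝ)
    (hzs : ∀ A : ℝ, 0 < A → 1 < zs A ∧ zs A * Real.log (zs A) - zs A + 1 = A) :
    ∀ A₁ A₂ : ℝ, 0 < A₁ → A₁ < A₂ →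
      (zs A₂ - 1) / (A₂ + zs A₂ - 1) < (zs A₁ - 1) / (A₁ + zs A₁ - 1) := by
  intro A₁ A₂ hA₁ hA
  obtain ⟨hz₁, he₁⟩ := hzs A₁ hA₁
  obtain ⟨hz₂, he₂⟩ := hzs A₂ (hA₁.trans hA)
  have hzs_lt : zs A₁ < zs A₂ :=
    (strictMonoOn_mul_log_sub_self.lt_iff_lt hz₁.le hz₂.le).mp (by linarith)
  have hden₁ : A₁ + zs A₁ - 1 = zs A₁ * log (zs A₁) := by linarith
  have hden₂ : A₂ + zs A₂ - 1 = zs A₂ * log (zs A₂) := by linarith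
  rw [hden₁, hden₂]
  exact strictAntiOn_sub_one_div_mul_log hz₁ hz₂ hzs_lt
end

section
/- The optimal downlink time allocation tends to zero as the sum SNR grows: τ_0*(A) = (z*(A) − 1)/(A + z*(A) − 1) → 0 as A → ∞. -/
open Real Filter

/-! Writing `z = z*(A)`, the defining equation gives `A + z - 1 = z log z`, so
`τ_0*(A) = (z - 1) / (z log z) ≤ 1 / log z`. Since `log z ≤ z - 1`, also `A ≤ (z - 1)²`,
hence `z*(A) → ∞` and `τ_0*(A) → 0`. -/

lemma mul_log_sub_add_one_le_sq {z : ℝ} (hz : 0 < z) : z * log z - z + 1 ≤ (z - 1) ^ 2 := by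
  nlinarith [log_le_sub_one_of_pos hz]

lemma tendsto_atTop_of_mul_log_sub_add_one_eq {z : ℝ → ℝ}
    (hz : ∀ᶠ A in atTop, 1 < z A ∧ z A * log (z A) - z A + 1 = A) :
    Tendsto z atTop atTop := by
  have hsqrt : Tendsto (fun A => √A + 1) atTop atTop :=
    tendsto_atTop_add_const_right _ 1 tendsto_sqrt_atTop
  refine tendsto_atTop_mono' _ ?_ hsqrt
  filter_upwards [hz] with A ⟨h1, heq⟩
  have hA : A ≤ (z A - 1) ^ 2 := by linarith [mul_log_sub_add_one_le_sq (zero_lt_one.trans h1)]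
  have : √A ≤ z A - 1 := sqrt_le_sqrt hA |>.trans_eq (sqrt_sq (by linarith))
  linarith

lemma tendsto_sub_one_div_mul_log_atTop :
    Tendsto (fun z : ℝ => (z - 1) / (z * log z)) atTop (nhds 0) := by
  refine tendsto_of_tendsto_of_tendsto_of_le_of_le' tendsto_const_nhds
    ((tendsto_const_nhds (x := (1 : ℝ))).div_atTop tendsto_log_atTop) ?_ ?_
  all_goals filter_upwards [eventually_gt_atTop 1] with z hz
  all_goals have hlog := log_pos hz
  · exact div_nonneg (by linarith) (by positivity)
  · rw [div_le_div_iff₀ (by positivity) hlog]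
    nlinarith

/-- The optimal downlink time allocation `τ_0*(A) = (z*(A)−1)/(A+z*(A)−1)` tends to
`0` as `A → ∞`, where `z*(A) > 1` solves `z ln z − z + 1 = A`. -/
theorem stmt9 (zs : ℝ → ℝ)
    (hzs : ∀ A : ℝ, 0 < A → 1 < zs A ∧ zs A * Real.log (zs A) - zs A + 1 = A) :
    Tendsto (fun A : ℝ => (zs A - 1) / (A + zs A - 1)) atTop (nhds 0) := by
  have hsol : ∀ᶠ A in atTop, 1 < zs A ∧ zs A * log (zs A) - zs A + 1 = A :=
    eventually_gt_atTop 0 |>.mono hzs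
  have hzs_atTop : Tendsto zs atTop atTop :=
    tendsto_atTop_of_mul_log_sub_add_one_eq hsol
  refine (tendsto_sub_one_div_mul_log_atTop.comp hzs_atTop).congr' ?_
  filter_upwards [hsol] with A ⟨_, heq⟩
  rw [Function.comp_apply, show A + zs A - 1 = zs A * log (zs A) by linarith]
end

section
/- Let K ≥ 1, γ_1,...,γ_K > 0 and λ_1,...,λ_K > 0. Then there exist unique μ > 0 and z_1,...,z_K > 0 satisfying the system ln(1 + z_i) − z_i/(1 + z_i) = (μ/λ_i) · ln 2 for each i = 1,...,K, together with Σ_{i=1}^K λ_i γ_i/(1 + z_i) = μ · ln 2. -/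
/-! `φ(z) = log (1 + z) - z / (1 + z)` has derivative `z / (1 + z)^2 > 0` and `φ(z) ≥ log (1 + z) - 1`,
so it is an increasing bijection of `[0, ∞)`. Hence the first `K` equations force
`z_i = φ⁻¹(t / λ_i)` with `t = μ log 2`, increasing in `t`, and the last one says that `t` is a zero
of `t ↦ ∑ λ_i γ_i / (1 + z_i(t)) - t`. That function is continuous and strictly decreasing, equals
`∑ λ_i γ_i > 0` at `0` and is `≤ 0` at `∑ λ_i γ_i`, so it has exactly one zero, which is positive. -/

open Real Set

noncomputable def logGap (z : ℝ) : ℝ := log (1 + z) - z / (1 + z)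

lemma hasDerivAt_logGap {z : ℝ} (hz : 0 < 1 + z) : HasDerivAt logGap (z / (1 + z) ^ 2) z := by
  have h1 : HasDerivAt (fun z : ℝ => 1 + z) 1 z := (hasDerivAt_id z).const_add 1
  refine ((h1.log hz.ne').sub ((hasDerivAt_id' z).div h1 hz.ne')).congr_deriv ?_
  field_simp
  ring

lemma continuousOn_logGap : ContinuousOn logGap (Ici 0) := fun _ hz =>
  (hasDerivAt_logGap (by simp only [mem_Ici] at hz; linarith)).continuousAt.continuousWithinAt

lemma strictMonoOn_logGap : StrictMonoOn logGap (Ici 0) := by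
  refine strictMonoOn_of_deriv_pos (convex_Ici 0) continuousOn_logGap fun z hz => ?_
  rw [interior_Ici, mem_Ioi] at hz
  rw [(hasDerivAt_logGap (by linarith)).deriv]
  positivity

@[simp]
lemma logGap_zero : logGap 0 = 0 := by simp [logGap]

lemma log_one_add_sub_one_le_logGap {z : ℝ} (hz : 0 ≤ z) : log (1 + z) - 1 ≤ logGap z := by
  have : z / (1 + z) ≤ 1 := (div_le_one (by linarith)).2 (by linarith)
  rw [logGap]
  linarith

lemma mapsTo_logGap : MapsTo logGap (Ici 0) (Ici 0) := fun _ hz =>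
  logGap_zero ▸ strictMonoOn_logGap.monotoneOn self_mem_Ici hz hz

lemma surjOn_logGap : SurjOn logGap (Ici 0) (Ici 0) := by
  intro y hy
  rw [mem_Ici] at hy
  set M := exp (y + 1) - 1
  have hM : 0 ≤ M := by linarith [add_one_le_exp (y + 1)]
  have hyM : y ≤ logGap M := by
    have h := log_one_add_sub_one_le_logGap hM
    rwa [add_sub_cancel, log_exp, add_sub_cancel_right] at h
  obtain ⟨z, hz, rfl⟩ := intermediate_value_Icc hM (continuousOn_logGap.mono Icc_subset_Ici_self)
    ⟨by rwa [logGap_zero], hyM⟩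
  exact ⟨z, hz.1, rfl⟩

noncomputable def logGapIso : Ici (0 : ℝ) ≃o Ici (0 : ℝ) :=
  StrictMono.orderIsoOfSurjective mapsTo_logGap.restrict
    (fun a b h => strictMonoOn_logGap a.2 b.2 h)
    (fun y => by
      obtain ⟨z, hz, hzy⟩ := surjOn_logGap y.2
      exact ⟨⟨z, hz⟩, Subtype.ext hzy⟩)

-- `projIci` clamps negative arguments to `0`, so `logGapInv y = 0` for `y ≤ 0`.
noncomputable def logGapInv (y : ℝ) : ℝ := logGapIso.symm (projIci 0 y)

lemma logGapInv_nonneg (y : ℝ) : 0 ≤ logGapInv y := (logGapIso.symm (projIci 0 y)).2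

lemma logGap_logGapInv {y : ℝ} (hy : 0 ≤ y) : logGap (logGapInv y) = y := by
  rw [logGapInv, projIci_of_mem hy]
  exact congrArg Subtype.val (logGapIso.apply_symm_apply _)

lemma logGapInv_logGap {z : ℝ} (hz : 0 ≤ z) : logGapInv (logGap z) = z :=
  strictMonoOn_logGap.injOn (logGapInv_nonneg _) hz (logGap_logGapInv (mapsTo_logGap hz))

lemma logGapInv_pos {y : ℝ} (hy : 0 < y) : 0 < logGapInv y := by
  refine (logGapInv_nonneg y).lt_of_ne fun h => hy.ne ?_
  rw [← logGap_logGapInv hy.le, ← h, logGap_zero]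

lemma monotone_logGapInv : Monotone logGapInv := fun _ _ h =>
  logGapIso.symm.monotone (monotone_projIci h)

lemma continuous_logGapInv : Continuous logGapInv :=
  continuous_subtype_val.comp <| logGapIso.symm.continuous.comp <|
    (continuous_const.max continuous_id).subtype_mk _

@[simp]
lemma logGapInv_zero : logGapInv 0 = 0 := by
  simpa using logGapInv_logGap le_rfl

section Residual

variable {ι : Type*} [Fintype ι] (w lam : ι → ℝ)

noncomputable def logGapResidual (t : ℝ) : ℝ := ∑ i, w i / (1 + logGapInv (t / lam i)) - t

lemma one_le_one_add_logGapInv (y : ℝ) : 1 ≤ 1 + logGapInv y := by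
  linarith [logGapInv_nonneg y]

lemma continuous_logGapResidual : Continuous (logGapResidual w lam) := by
  refine (continuous_finsetSum _ fun i _ => continuous_const.div ?_ fun t => ?_).sub continuous_id
  · exact continuous_const.add (continuous_logGapInv.comp (continuous_id.div_const _))
  · exact (zero_lt_one.trans_le (one_le_one_add_logGapInv _)).ne'

lemma strictAnti_logGapResidual (hw : ∀ i, 0 ≤ w i) (hlam : ∀ i, 0 ≤ lam i) :
    StrictAnti (logGapResidual w lam) := by
  intro a b hab
  have hsum : ∑ i, w i / (1 + logGapInv (b / lam i)) ≤ ∑ i, w i / (1 + logGapInv (a / lam i)) :=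
    Finset.sum_le_sum fun i _ => div_le_div_of_nonneg_left (hw i)
      (zero_lt_one.trans_le (one_le_one_add_logGapInv _))
      (add_le_add_right (monotone_logGapInv (div_le_div_of_nonneg_right hab.le (hlam i))) 1)
  rw [logGapResidual, logGapResidual]
  linarith

lemma logGapResidual_zero : logGapResidual w lam 0 = ∑ i, w i := by
  simp [logGapResidual]

lemma logGapResidual_sum_nonpos (hw : ∀ i, 0 ≤ w i) : logGapResidual w lam (∑ i, w i) ≤ 0 := by
  have : ∑ i, w i / (1 + logGapInv ((∑ j, w j) / lam i)) ≤ ∑ i, w i :=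
    Finset.sum_le_sum fun i _ => div_le_self (hw i) (one_le_one_add_logGapInv _)
  rw [logGapResidual]
  linarith

lemma exists_pos_logGapResidual_eq_zero (hw : ∀ i, 0 ≤ w i) (hS : 0 < ∑ i, w i) :
    ∃ t, 0 < t ∧ logGapResidual w lam t = 0 := by
  obtain ⟨t, ht, hRt⟩ := intermediate_value_Icc' hS.le (continuous_logGapResidual w lam).continuousOn
    ⟨logGapResidual_sum_nonpos w lam hw, (logGapResidual_zero w lam).symm ▸ hS.le⟩
  refine ⟨t, ht.1.lt_of_ne ?_, hRt⟩
  rintro rfl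
  rw [logGapResidual_zero] at hRt
  exact hS.ne' hRt

end Residual

/-- For positive `γ_i` and `λ_i` there exist unique `μ > 0` and `z_1,…,z_K > 0`
satisfying `ln(1+z_i) − z_i/(1+z_i) = (μ/λ_i) ln 2` for each `i` together with
`Σ λ_i γ_i/(1+z_i) = μ ln 2`. -/
theorem stmt14 (K : ℕ) (hK : 1 ≤ K) (γ : Fin K → ℝ) (hγ : ∀ i, 0 < γ i)
    (lam : Fin K → ℝ) (hlam : ∀ i, 0 < lam i) :
    ∃! p : ℝ × (Fin K → ℝ),
      0 < p.1 ∧ (∀ i, 0 < p.2 i) ∧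
      (∀ i, Real.log (1 + p.2 i) - p.2 i / (1 + p.2 i) = (p.1 / lam i) * Real.log 2) ∧
      ∑ i, lam i * γ i / (1 + p.2 i) = p.1 * Real.log 2 := by
  have hlog2 : 0 < log 2 := log_pos one_lt_two
  have hw : ∀ i, 0 < lam i * γ i := fun i => mul_pos (hlam i) (hγ i)
  have hS : 0 < ∑ i, lam i * γ i :=
    Finset.sum_pos (fun i _ => hw i) (Finset.univ_nonempty_iff.2 ⟨⟨0, hK⟩⟩)
  obtain ⟨t, ht, hRt⟩ := exists_pos_logGapResidual_eq_zero _ lam (fun i => (hw i).le) hS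
  refine ⟨(t / log 2, fun i => logGapInv (t / lam i)), ⟨div_pos ht hlog2,
    fun i => logGapInv_pos (div_pos ht (hlam i)), fun i => ?_, ?_⟩, ?_⟩
  · rw [← logGap, logGap_logGapInv (div_pos ht (hlam i)).le]
    field_simp
  · rw [logGapResidual, sub_eq_zero] at hRt
    rwa [div_mul_cancel₀ _ hlog2.ne']
  · rintro ⟨μ, z⟩ ⟨-, hz, hgap, hsum⟩
    dsimp only at hz hgap hsum
    have hz_eq : ∀ i, z i = logGapInv (μ * log 2 / lam i) := fun i => by
      rw [← div_mul_eq_mul_div, ← hgap i]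
      exact (logGapInv_logGap (hz i).le).symm
    have ht_eq : μ * log 2 = t := by
      refine (strictAnti_logGapResidual _ lam (fun i => (hw i).le) fun i => (hlam i).le).injective ?_
      rw [hRt, logGapResidual, sub_eq_zero]
      simpa only [← hz_eq] using hsum
    subst ht_eq
    rw [mul_div_cancel_right₀ _ hlog2.ne', ← funext hz_eq]
end

section
/- Suppose τ* ∈ D maximizes the minimum throughput over D, i.e., min_{1≤i≤K} R_i(τ*) ≥ min_{1≤i≤K} R_i(τ) for all τ ∈ D. Then all the user throughputs are equal, R_1(τ*) = R_2(τ*) = ... = R_K(τ*), and the total time constraint is tight: Σ_{j=0}^K τ_j* = 1. -/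
/-!
Uniform allocation gives every user positive throughput, so the optimal minimum `m` is positive
and hence every slot of `τ*` is positive. Each `R_i` is strictly increasing in `τ_0` while
`τ_i > 0`, so unused time, given to `τ_0`, would raise every throughput above `m`. If some user
were strictly above `m`, moving a little of its time to `τ_0` would keep it above `m` by
continuity while strictly raising all the others.
-/

open Real

open Filter Topology

lemma lt_ciInf_of_finite {ι α : Type*} [ConditionallyCompleteLinearOrder α] [Nonempty ι]
    [Finite ι] {f : ι → α} {a : α} (h : ∀ i, a < f i) : a < ⨅ i, f i := by
  obtain ⟨j, hj⟩ := exists_eq_ciInf_of_finite (f := f)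
  exact hj ▸ h j

lemma add_single_mem_Dfeas {K : ℕ} {τ : Fin (K + 1) → ℝ} (hτ : ∀ j, 0 ≤ τ j) {j : Fin (K + 1)}
    {ε : ℝ} (hε : 0 ≤ ε) (hsum : ∑ k, τ k + ε ≤ 1) : τ + Pi.single j ε ∈ Dfeas K := by
  refine ⟨fun k => add_nonneg (hτ k) ?_, ?_⟩
  · by_cases hk : k = j
    · subst hk; simpa
    · simp [hk]
  · simpa [Finset.sum_add_distrib] using hsum

lemma add_single_sub_single_mem_Dfeas {K : ℕ} {τ : Fin (K + 1) → ℝ} (hτ : τ ∈ Dfeas K)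
    {j k : Fin (K + 1)} (hjk : j ≠ k) {ε : ℝ} (hε : 0 ≤ ε) (hεk : ε ≤ τ k) :
    τ + Pi.single j ε - Pi.single k ε ∈ Dfeas K := by
  refine ⟨fun l => ?_, ?_⟩
  · by_cases hl : l = k
    · subst hl; simp [hjk, hεk]
    · have := hτ.1 l
      by_cases hl' : l = j
      · subst hl'; simpa [hl] using add_nonneg this hε
      · simp [hl, hl', this]
  · simpa [Finset.sum_add_distrib, Finset.sum_sub_distrib] using hτ.2

section Throughput

variable {K : ℕ} {γ : Fin K → ℝ} {i : Fin K} {τ τ' : Fin (K + 1) → ℝ}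

lemma Rthru_pos_iff (hγ : 0 < γ i) (hτ : ∀ j, 0 ≤ τ j) :
    0 < Rthru γ i τ ↔ 0 < τ 0 ∧ 0 < τ i.succ := by
  unfold Rthru
  split_ifs with hi
  · have harg : 0 < 1 + γ i * τ 0 / τ i.succ := by
      have := div_nonneg (mul_nonneg hγ.le (hτ 0)) hi.le
      linarith
    rw [mul_pos_iff_of_pos_left hi, Real.logb_pos_iff one_lt_two harg, lt_add_iff_pos_right,
      div_pos_iff_of_pos_right hi, mul_pos_iff_of_pos_left hγ]
    exact ⟨fun h => ⟨h, hi⟩, And.left⟩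
  · simp [hi]

lemma Rthru_lt_Rthru_of_apply_zero_lt (hγ : 0 < γ i) (hτ0 : 0 ≤ τ 0) (hi : 0 < τ i.succ)
    (h0 : τ 0 < τ' 0) (hsucc : τ' i.succ = τ i.succ) : Rthru γ i τ < Rthru γ i τ' := by
  unfold Rthru
  rw [hsucc, if_pos hi, if_pos hi]
  refine mul_lt_mul_of_pos_left (Real.logb_lt_logb one_lt_two (by positivity) ?_) hi
  gcongr

lemma continuousAt_Rthru (hγ : 0 ≤ γ i) (hτ0 : 0 ≤ τ 0) (hi : 0 < τ i.succ) :
    ContinuousAt (Rthru γ i) τ := by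
  have hnear : Rthru γ i =ᶠ[𝓝 τ] fun τ => τ i.succ * Real.logb 2 (1 + γ i * τ 0 / τ i.succ) := by
    filter_upwards [(continuous_apply i.succ).continuousAt.eventually (lt_mem_nhds hi)]
      with τ hτ using if_pos hτ
  refine ContinuousAt.congr ?_ hnear.symm
  have harg : ContinuousAt (fun τ : Fin (K + 1) → ℝ => 1 + γ i * τ 0 / τ i.succ) τ := by
    fun_prop (disch := exact hi.ne')
  exact (continuous_apply _).continuousAt.mul (harg.logb (by positivity))

end Throughput

def IsMaxMinOptimal {K : ℕ} (γ : Fin K → ℝ) (τs : Fin (K + 1) → ℝ) : Prop :=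
  ∀ τ ∈ Dfeas K, (⨅ i, Rthru γ i τ) ≤ ⨅ i, Rthru γ i τs

lemma eventually_lt_Rthru_add_single_sub_single {K : ℕ} {γ : Fin K → ℝ} {k : Fin K}
    {τ : Fin (K + 1) → ℝ} (hγ : 0 ≤ γ k) (hτ0 : 0 ≤ τ 0) (hk : 0 < τ k.succ) {m : ℝ}
    (hm : m < Rthru γ k τ) :
    ∀ᶠ ε in 𝓝 0, m < Rthru γ k (τ + Pi.single 0 ε - Pi.single k.succ ε) := by
  have hcurve : Continuous fun ε : ℝ => τ + Pi.single 0 ε - Pi.single k.succ ε :=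
    (continuous_const.fun_add (continuous_single (A := fun _ => ℝ) 0)).fun_sub
      (continuous_single (A := fun _ => ℝ) k.succ)
  exact ((continuousAt_Rthru hγ hτ0 hk).comp_of_eq hcurve.continuousAt (by simp)).eventually
    (lt_mem_nhds (by simpa using hm))

section MaxMin

variable {K : ℕ} {γ : Fin K → ℝ} {τs : Fin (K + 1) → ℝ}

lemma IsMaxMinOptimal.not_forall_lt [Nonempty (Fin K)] (hmax : IsMaxMinOptimal γ τs)
    {τ : Fin (K + 1) → ℝ} (hτ : τ ∈ Dfeas K) : ¬ ∀ i, (⨅ j, Rthru γ j τs) < Rthru γ i τ := fun hlt =>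
  (hmax τ hτ).not_gt (lt_ciInf_of_finite hlt)

lemma IsMaxMinOptimal.pos (hγ : ∀ i, 0 < γ i) (hτs : ∀ j, 0 ≤ τs j)
    (hmax : IsMaxMinOptimal γ τs) (i : Fin K) : 0 < τs 0 ∧ 0 < τs i.succ := by
  have : Nonempty (Fin K) := ⟨i⟩
  have hunif : (fun _ => 1 / ((K : ℝ) + 1) : Fin (K + 1) → ℝ) ∈ Dfeas K :=
    ⟨fun _ => by positivity, by simp [mul_inv_cancel₀ (by positivity : (K : ℝ) + 1 ≠ 0)]⟩
  have hm_pos : 0 < ⨅ j, Rthru γ j τs :=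
    (lt_ciInf_of_finite fun j => (Rthru_pos_iff (hγ j) hunif.1).2
      ⟨by positivity, by positivity⟩).trans_le (hmax _ hunif)
  exact (Rthru_pos_iff (hγ i) hτs).1 (hm_pos.trans_le (ciInf_le (Finite.bddBelow_range _) i))

lemma IsMaxMinOptimal.sum_eq_one [Nonempty (Fin K)] (hγ : ∀ i, 0 < γ i) (hτs : τs ∈ Dfeas K)
    (hmax : IsMaxMinOptimal γ τs) : ∑ j, τs j = 1 := by
  by_contra hne
  have hlt : ∑ j, τs j < 1 := lt_of_le_of_ne hτs.2 hne
  refine hmax.not_forall_lt (add_single_mem_Dfeas hτs.1 (j := 0) (sub_nonneg.2 hτs.2) (by simp))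
    fun i => (ciInf_le (Finite.bddBelow_range _) i).trans_lt
      (Rthru_lt_Rthru_of_apply_zero_lt (hγ i) (hτs.1 0) (hmax.pos hγ hτs.1 i).2 ?_ ?_)
  · simpa using hlt
  · simp [Fin.succ_ne_zero]

lemma IsMaxMinOptimal.Rthru_eq (hγ : ∀ i, 0 < γ i) (hτs : τs ∈ Dfeas K)
    (hmax : IsMaxMinOptimal γ τs) (a b : Fin K) : Rthru γ a τs = Rthru γ b τs := by
  have : Nonempty (Fin K) := ⟨a⟩
  set m := ⨅ i, Rthru γ i τs
  have hm_le : ∀ i, m ≤ Rthru γ i τs := ciInf_le (Finite.bddBelow_range _)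
  by_contra hab
  obtain ⟨k, hk⟩ : ∃ k, m < Rthru γ k τs := by
    by_contra! hall
    exact hab (((hall a).antisymm (hm_le a)).trans ((hall b).antisymm (hm_le b)).symm)
  have hpos := hmax.pos hγ hτs.1
  obtain ⟨ε, ⟨hεk, hε_lt⟩, hε_pos : 0 < ε⟩ :=
    (((eventually_lt_Rthru_add_single_sub_single (hγ k).le (hτs.1 0) (hpos k).2 hk).and
      (gt_mem_nhds (hpos k).2)).filter_mono nhdsWithin_le_nhds |>.and
      (self_mem_nhdsWithin (s := Set.Ioi 0))).exists
  refine hmax.not_forall_lt (add_single_sub_single_mem_Dfeas hτs (Fin.succ_ne_zero k).symm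
    hε_pos.le hε_lt.le) fun i => ?_
  rcases eq_or_ne i k with rfl | hik
  · exact hεk
  · refine (hm_le i).trans_lt (Rthru_lt_Rthru_of_apply_zero_lt (hγ i) (hτs.1 0) (hpos i).2 ?_ ?_)
    · simpa [(Fin.succ_ne_zero k).symm] using hε_pos
    · simp [Fin.succ_ne_zero, hik]

end MaxMin

/-- If `τ* ∈ D` maximizes the minimum user throughput over `D`, then all user
throughputs at `τ*` are equal and the total time constraint is tight. -/
theorem stmt15 (K : ℕ) (hK : 1 ≤ K) (γ : Fin K → ℝ) (hγ : ∀ i, 0 < γ i)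
    (τs : Fin (K + 1) → ℝ) (hτs : τs ∈ Dfeas K)
    (hmax : ∀ τ ∈ Dfeas K, (⨅ i : Fin K, Rthru γ i τ) ≤ ⨅ i : Fin K, Rthru γ i τs) :
    (∀ i j : Fin K, Rthru γ i τs = Rthru γ j τs) ∧ ∑ j, τs j = 1 := by
  have : Nonempty (Fin K) := ⟨⟨0, hK⟩⟩
  exact ⟨IsMaxMinOptimal.Rthru_eq hγ hτs hmax, IsMaxMinOptimal.sum_eq_one hγ hτs hmax⟩
end
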